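/- arXiv:2601.19553 — 3 statements merged into one kernel-verified Lean document; each statement's English description precedes it below -/
import Mathlib

section
/- Let f : ℝ → ℝ be twice continuously differentiable on [0,1] with ∫₀¹ f(x) dx = 1, and set g(x) = x(1-x)f''(x). Suppose C > 0 and for every h ∈ (0, 1/4] there is an integrable function B_h : [0,1] → ℝ with |B_h(x)| ≤ C·h for all x ∈ [0,1] and |B_h(x) - (h/2)·g(x)| ≤ C·h² for all x ∈ [2h, 1-2h]. Then there exists a constant C' > 0 such that for all h ∈ (0, 1/4], |∫₀¹ (f(x) + B_h(x)) dx - (1 + (h/2)(f(0) + f(1) - 2))| ≤ C'·h². -/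
open MeasureTheory

/-- Total-mass expansion for Chen's boundary beta kernel estimator. Let `f` be a twice
continuously differentiable density on `[0,1]` (derivatives `f'`, continuous `f''`,
`∫₀¹ f = 1`). Suppose `C > 0` and for every `h ∈ (0, 1/4]` the bias `B h` is integrable on
`[0,1]`, satisfies `|B h x| ≤ C h` on `[0,1]` and
`|B h x - (h/2) x(1-x) f''(x)| ≤ C h²` on `[2h, 1-2h]`. Then there is `C' > 0` with
`|∫₀¹ (f + B h) - (1 + (h/2)(f 0 + f 1 - 2))| ≤ C' h²` for all `h ∈ (0, 1/4]`. -/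
theorem total_mass_expansion
    (f f' f'' : ℝ → ℝ)
    (hf' : ∀ x ∈ Set.Icc (0:ℝ) 1, HasDerivAt f (f' x) x)
    (hf'' : ∀ x ∈ Set.Icc (0:ℝ) 1, HasDerivAt f' (f'' x) x)
    (hcont : ContinuousOn f'' (Set.Icc (0:ℝ) 1))
    (hint : ∫ x in (0:ℝ)..1, f x = 1)
    (C : ℝ) (hC : 0 < C)
    (B : ℝ → ℝ → ℝ)
    (hBint : ∀ h ∈ Set.Ioc (0:ℝ) (1/4), IntegrableOn (B h) (Set.Icc (0:ℝ) 1))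
    (hBbd : ∀ h ∈ Set.Ioc (0:ℝ) (1/4), ∀ x ∈ Set.Icc (0:ℝ) 1, |B h x| ≤ C * h)
    (hBapprox : ∀ h ∈ Set.Ioc (0:ℝ) (1/4), ∀ x ∈ Set.Icc (2*h) (1 - 2*h),
      |B h x - h / 2 * (x * (1 - x) * f'' x)| ≤ C * h ^ 2) :
    ∃ C' > 0, ∀ h ∈ Set.Ioc (0:ℝ) (1/4),
      |(∫ x in (0:ℝ)..1, (f x + B h x)) - (1 + h / 2 * (f 0 + f 1 - 2))| ≤ C' * h ^ 2 := by
  have h01 : (0:ℝ) ≤ 1 := by norm_num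
  have huIcc : Set.uIcc (0:ℝ) 1 = Set.Icc 0 1 := Set.uIcc_of_le h01
  have hf'cont : ContinuousOn f' (Set.Icc (0:ℝ) 1) :=
    fun x hx => (hf'' x hx).continuousAt.continuousWithinAt
  have hfcont : ContinuousOn f (Set.Icc (0:ℝ) 1) :=
    fun x hx => (hf' x hx).continuousAt.continuousWithinAt
  set g : ℝ → ℝ := fun x => x * (1 - x) * f'' x with hgdef
  have hgcont : ContinuousOn g (Set.Icc (0:ℝ) 1) := by
    apply ContinuousOn.mul _ hcont
    exact (continuousOn_id.mul (continuousOn_const.sub continuousOn_id))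
  obtain ⟨M, hM⟩ := (isCompact_Icc).exists_bound_of_continuousOn hgcont
  have hM0 : 0 ≤ M := le_trans (norm_nonneg _) (hM 0 (by norm_num))
  have hgint : IntervalIntegrable g volume 0 1 := by
    apply ContinuousOn.intervalIntegrable; rwa [huIcc]
  have hf'int : IntervalIntegrable f' volume 0 1 := by
    apply ContinuousOn.intervalIntegrable; rwa [huIcc]
  have hfint : IntervalIntegrable f volume 0 1 := by
    apply ContinuousOn.intervalIntegrable; rwa [huIcc]
  have hf''int : IntervalIntegrable f'' volume 0 1 := by
    apply ContinuousOn.intervalIntegrable; rwa [huIcc]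
  -- integration by parts, step 2 first
  have ibp2 : ∫ x in (0:ℝ)..1, (1 - 2*x) * f' x
      = (1 - 2*1) * f 1 - (1 - 2*0) * f 0 - ∫ x in (0:ℝ)..1, (-2) * f x := by
    refine intervalIntegral.integral_mul_deriv_eq_deriv_mul
      (u := fun x : ℝ => 1 - 2*x) (u' := fun _ : ℝ => (-2 : ℝ))
      (v := f) (v' := f') ?_ ?_ ?_ ?_
    · intro x hx
      have : HasDerivAt (fun x : ℝ => 1 - 2*x) (0 - 2*1) x :=
        (hasDerivAt_const x (1:ℝ)).sub ((hasDerivAt_id x).const_mul 2)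
      simpa using this
    · intro x hx; exact hf' x (huIcc ▸ hx)
    · exact intervalIntegrable_const
    · exact hf'int
  have ibp1 : ∫ x in (0:ℝ)..1, (x * (1 - x)) * f'' x
      = (1 * (1 - 1)) * f' 1 - (0 * (1 - 0)) * f' 0 - ∫ x in (0:ℝ)..1, (1 - 2*x) * f' x := by
    refine intervalIntegral.integral_mul_deriv_eq_deriv_mul
      (u := fun x : ℝ => x * (1 - x)) (u' := fun x : ℝ => 1 - 2*x)
      (v := f') (v' := f'') ?_ ?_ ?_ ?_
    · intro x hx
      have : HasDerivAt (fun x : ℝ => x * (1 - x)) (1 * (1 - x) + x * (0 - 1)) x :=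
        (hasDerivAt_id x).mul ((hasDerivAt_const x (1:ℝ)).sub (hasDerivAt_id x))
      exact this.congr_deriv (by ring)
    · intro x hx; exact hf'' x (huIcc ▸ hx)
    · exact ((continuous_const.sub (continuous_const.mul continuous_id))).intervalIntegrable 0 1
    · apply ContinuousOn.intervalIntegrable; rwa [huIcc]
  have hgval : ∫ x in (0:ℝ)..1, g x = f 0 + f 1 - 2 := by
    have e2 : ∫ x in (0:ℝ)..1, (-2) * f x = -2 := by
      rw [intervalIntegral.integral_const_mul, hint]; ring
    rw [hgdef]
    simp only []
    rw [ibp1, ibp2, e2]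
    ring
  refine ⟨5*C + 2*M + 1, by positivity, ?_⟩
  intro h hh
  obtain ⟨hh0, hh4⟩ := hh
  have h2h : 2*h ≤ 1 - 2*h := by linarith
  have h2h0 : (0:ℝ) ≤ 2*h := by linarith
  have h2h1 : 1 - 2*h ≤ 1 := by linarith
  have hBI := hBint h ⟨hh0, hh4⟩
  have hBii : IntervalIntegrable (B h) volume 0 1 := by
    apply IntegrableOn.intervalIntegrable; rwa [huIcc]
  set φ : ℝ → ℝ := fun x => B h x - h / 2 * g x with hφdef
  have hφii : IntervalIntegrable φ volume 0 1 :=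
    hBii.sub (hgint.const_mul _)
  have hsub : ∀ a b : ℝ, 0 ≤ a → a ≤ b → b ≤ 1 → IntervalIntegrable φ volume a b := by
    intro a b ha hab hb1
    apply hφii.mono_set
    rw [Set.uIcc_of_le hab, huIcc]
    exact Set.Icc_subset_Icc ha hb1
  have hsplit : ∫ x in (0:ℝ)..1, φ x
      = (∫ x in (0:ℝ)..(2*h), φ x) + (∫ x in (2*h)..(1-2*h), φ x)
        + ∫ x in (1-2*h)..(1:ℝ), φ x := by
    rw [intervalIntegral.integral_add_adjacent_intervals
        (hsub 0 (2*h) le_rfl h2h0 (by linarith))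
        (hsub (2*h) (1-2*h) h2h0 h2h (by linarith)),
      intervalIntegral.integral_add_adjacent_intervals
        (hsub 0 (1-2*h) le_rfl (by linarith) (by linarith))
        (hsub (1-2*h) 1 (by linarith) (by linarith) le_rfl)]
  have hedge : ∀ x ∈ Set.Icc (0:ℝ) 1, |φ x| ≤ C*h + h/2 * M := by
    intro x hx
    have h1 := hBbd h ⟨hh0, hh4⟩ x hx
    have h2 : |h/2 * g x| ≤ h/2 * M := by
      rw [abs_mul, abs_of_nonneg (by linarith : (0:ℝ) ≤ h/2)]
      exact mul_le_mul_of_nonneg_left (hM x hx) (by linarith)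
    calc |φ x| ≤ |B h x| + |h/2 * g x| := abs_sub _ _
      _ ≤ C*h + h/2 * M := add_le_add h1 h2
  have hb1 : |∫ x in (0:ℝ)..(2*h), φ x| ≤ (C*h + h/2*M) * |2*h - 0| := by
    rw [← Real.norm_eq_abs]
    apply intervalIntegral.norm_integral_le_of_norm_le_const
    intro x hx
    rw [Real.norm_eq_abs]
    rw [Set.uIoc_of_le h2h0] at hx
    exact hedge x ⟨le_of_lt hx.1, le_trans hx.2 (by linarith)⟩
  have hb3 : |∫ x in (1-2*h)..(1:ℝ), φ x| ≤ (C*h + h/2*M) * |1 - (1-2*h)| := by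
    rw [← Real.norm_eq_abs]
    apply intervalIntegral.norm_integral_le_of_norm_le_const
    intro x hx
    rw [Real.norm_eq_abs]
    rw [Set.uIoc_of_le h2h1] at hx
    exact hedge x ⟨by linarith [hx.1], hx.2⟩
  have hb2 : |∫ x in (2*h)..(1-2*h), φ x| ≤ (C*h^2) * |(1-2*h) - 2*h| := by
    rw [← Real.norm_eq_abs]
    apply intervalIntegral.norm_integral_le_of_norm_le_const
    intro x hx
    rw [Real.norm_eq_abs]
    rw [Set.uIoc_of_le h2h] at hx
    exact hBapprox h ⟨hh0, hh4⟩ x ⟨le_of_lt hx.1, hx.2⟩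
  have habs1 : |2*h - 0| = 2*h := by rw [abs_of_nonneg]; ring_nf; linarith
  have habs3 : |1 - (1-2*h)| = 2*h := by rw [abs_of_nonneg] <;> linarith
  have habs2 : |(1-2*h) - 2*h| ≤ 1 := by rw [abs_of_nonneg] <;> linarith
  have hφbound : |∫ x in (0:ℝ)..1, φ x| ≤ (5*C + 2*M + 1) * h^2 := by
    rw [hsplit]
    have t1 : |∫ x in (0:ℝ)..(2*h), φ x| ≤ (C*h + h/2*M) * (2*h) := by rwa [habs1] at hb1
    have t3 : |∫ x in (1-2*h)..(1:ℝ), φ x| ≤ (C*h + h/2*M) * (2*h) := by rwa [habs3] at hb3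
    have t2 : |∫ x in (2*h)..(1-2*h), φ x| ≤ C*h^2 := by
      refine le_trans hb2 ?_
      calc C*h^2 * |(1-2*h) - 2*h| ≤ C*h^2 * 1 :=
            mul_le_mul_of_nonneg_left habs2 (by positivity)
        _ = C*h^2 := by ring
    calc |(∫ x in (0:ℝ)..(2*h), φ x) + (∫ x in (2*h)..(1-2*h), φ x)
          + ∫ x in (1-2*h)..(1:ℝ), φ x|
        ≤ |(∫ x in (0:ℝ)..(2*h), φ x)| + |(∫ x in (2*h)..(1-2*h), φ x)|
          + |∫ x in (1-2*h)..(1:ℝ), φ x| := by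
          exact le_trans (abs_add_le _ _) (add_le_add_left (abs_add_le _ _) _)
      _ ≤ (C*h + h/2*M) * (2*h) + C*h^2 + (C*h + h/2*M) * (2*h) := by
          linarith
      _ ≤ (5*C + 2*M + 1) * h^2 := by nlinarith [sq_nonneg h, hC.le, hM0]
  have hφval : ∫ x in (0:ℝ)..1, φ x
      = (∫ x in (0:ℝ)..1, B h x) - h/2 * (f 0 + f 1 - 2) := by
    rw [hφdef]
    rw [intervalIntegral.integral_sub hBii (hgint.const_mul _),
      intervalIntegral.integral_const_mul, hgval]
  have hmain : ∫ x in (0:ℝ)..1, (f x + B h x)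
      = 1 + ∫ x in (0:ℝ)..1, B h x := by
    rw [intervalIntegral.integral_add hfint hBii, hint]
  rw [hmain]
  have : 1 + (∫ x in (0:ℝ)..1, B h x) - (1 + h / 2 * (f 0 + f 1 - 2))
      = ∫ x in (0:ℝ)..1, φ x := by rw [hφval]; ring
  rw [this]
  exact hφbound
end

section
/- For real numbers a, b > 3/2, ∫₀¹ ( x(1-x) f_{a,b}''(x) )² dx = (a-1)(b-1)(a(3b-4)-4b+6) · Γ(2a-3) Γ(2b-3) Γ(a+b)² / ( (2a+2b-5)(2a+2b-3) Γ(a)² Γ(b)² Γ(2a+2b-6) ), where f_{a,b} is the Beta(a,b) density and Γ is the real Gamma function. -/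
open MeasureTheory Set intervalIntegral

/-- The Beta(a,b) density `f_{a,b}(x) = x^(a-1)(1-x)^(b-1)/B(a,b)`, where
`B(a,b) = Γ(a)Γ(b)/Γ(a+b)`. -/
noncomputable def betaDensity (a b : ℝ) : ℝ → ℝ :=
  fun x => x ^ (a - 1) * (1 - x) ^ (b - 1) /
    (Real.Gamma a * Real.Gamma b / Real.Gamma (a + b))

lemma I2_rbeta_integrable {u v : ℝ} (hu : 0 < u) (hv : 0 < v) :
    IntervalIntegrable (fun x : ℝ => x ^ (u - 1) * (1 - x) ^ (v - 1)) volume 0 1 := by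
  have h := Complex.betaIntegral_convergent (u := (u : ℂ)) (v := (v : ℂ))
    (by simpa using hu) (by simpa using hv)
  rw [intervalIntegrable_iff, uIoc_of_le zero_le_one] at h ⊢
  refine MeasureTheory.IntegrableOn.congr_fun h.re ?_ measurableSet_Ioc
  intro x hx
  have hx0 : (0:ℝ) ≤ x := le_of_lt hx.1
  have hx1 : (0:ℝ) ≤ 1 - x := by linarith [hx.2]
  have e1 : ((x : ℂ)) ^ ((u:ℂ) - 1) = ((x ^ (u-1) : ℝ) : ℂ) := by
    rw [Complex.ofReal_cpow hx0]; norm_num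
  have e2 : ((1 : ℂ) - (x:ℂ)) ^ ((v:ℂ) - 1) = (((1 - x) ^ (v-1) : ℝ) : ℂ) := by
    rw [Complex.ofReal_cpow hx1]; push_cast; norm_num
  simp only [e1, e2, ← Complex.ofReal_mul]
  exact Complex.ofReal_re _

lemma I2_rbeta_value {u v : ℝ} (hu : 0 < u) (hv : 0 < v) :
    ∫ x in (0:ℝ)..1, x ^ (u - 1) * (1 - x) ^ (v - 1)
      = Real.Gamma u * Real.Gamma v / Real.Gamma (u + v) := by
  have key := Complex.Gamma_mul_Gamma_eq_betaIntegral (s := (u:ℂ)) (t := (v:ℂ))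
    (by simpa using hu) (by simpa using hv)
  have hbeta : Complex.betaIntegral (u:ℂ) (v:ℂ)
      = ((∫ x in (0:ℝ)..1, x ^ (u - 1) * (1 - x) ^ (v - 1) : ℝ) : ℂ) := by
    rw [Complex.betaIntegral, ← intervalIntegral.integral_ofReal]
    refine intervalIntegral.integral_congr fun x hx => ?_
    rw [uIcc_of_le zero_le_one] at hx
    have hx0 : (0:ℝ) ≤ x := hx.1
    have hx1 : (0:ℝ) ≤ 1 - x := by linarith [hx.2]
    rw [show ((u:ℂ) - 1) = ((u - 1 : ℝ) : ℂ) by push_cast; ring,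
      show ((v:ℂ) - 1) = ((v - 1 : ℝ) : ℂ) by push_cast; ring,
      show (1 - (x:ℂ)) = ((1 - x : ℝ) : ℂ) by push_cast; ring,
      ← Complex.ofReal_cpow hx0, ← Complex.ofReal_cpow hx1, ← Complex.ofReal_mul]
  rw [hbeta, ← Complex.ofReal_add, Complex.Gamma_ofReal, Complex.Gamma_ofReal,
    Complex.Gamma_ofReal, ← Complex.ofReal_mul, ← Complex.ofReal_mul] at key
  have h2 := Complex.ofReal_inj.mp key
  have hne : Real.Gamma (u + v) ≠ 0 := (Real.Gamma_pos_of_pos (by linarith)).ne'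
  field_simp
  linarith [h2]

lemma I2_hasDerivAt_mono (p q : ℝ) {x : ℝ} (hx : x ≠ 0) (hx1 : (1:ℝ) - x ≠ 0) :
    HasDerivAt (fun y : ℝ => y ^ p * (1 - y) ^ q)
      (p * x ^ (p - 1) * (1 - x) ^ q - q * x ^ p * (1 - x) ^ (q - 1)) x := by
  have h1 : HasDerivAt (fun y : ℝ => y ^ p) (p * x ^ (p - 1)) x :=
    Real.hasDerivAt_rpow_const (Or.inl hx)
  have h0 : HasDerivAt (fun y : ℝ => 1 - y) (-1) x := (hasDerivAt_id x).const_sub 1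
  have h2 := h0.rpow_const (p := q) (Or.inl hx1)
  have h3 := h1.mul h2
  refine h3.congr_deriv ?_
  ring

lemma I2_deriv1 (a b : ℝ) {x : ℝ} (hx : x ∈ Set.Ioo (0:ℝ) 1) :
    HasDerivAt (betaDensity a b)
      (((a-1) * (x^(a-2) * (1-x)^(b-1)) - (b-1) * (x^(a-1) * (1-x)^(b-2))) /
        (Real.Gamma a * Real.Gamma b / Real.Gamma (a+b))) x := by
  have hx0 : x ≠ 0 := ne_of_gt hx.1
  have hx1 : (1:ℝ) - x ≠ 0 := ne_of_gt (by linarith [hx.2])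
  have h := (I2_hasDerivAt_mono (a-1) (b-1) hx0 hx1).div_const
    (Real.Gamma a * Real.Gamma b / Real.Gamma (a+b))
  unfold betaDensity
  refine h.congr_deriv ?_
  rw [show (a-1-1:ℝ) = a-2 by ring, show (b-1-1:ℝ) = b-2 by ring]
  ring

lemma I2_deriv2 (a b : ℝ) {x : ℝ} (hx : x ∈ Set.Ioo (0:ℝ) 1) :
    HasDerivAt (fun y : ℝ =>
        ((a-1) * (y^(a-2) * (1-y)^(b-1)) - (b-1) * (y^(a-1) * (1-y)^(b-2))) /
          (Real.Gamma a * Real.Gamma b / Real.Gamma (a+b)))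
      (((a-1) * ((a-2) * (x^(a-3) * (1-x)^(b-1)) - (b-1) * (x^(a-2) * (1-x)^(b-2)))
        - (b-1) * ((a-1) * (x^(a-2) * (1-x)^(b-2)) - (b-2) * (x^(a-1) * (1-x)^(b-3)))) /
        (Real.Gamma a * Real.Gamma b / Real.Gamma (a+b))) x := by
  have hx0 : x ≠ 0 := ne_of_gt hx.1
  have hx1 : (1:ℝ) - x ≠ 0 := ne_of_gt (by linarith [hx.2])
  have h1 := (I2_hasDerivAt_mono (a-2) (b-1) hx0 hx1).const_mul (a-1)
  have h2 := (I2_hasDerivAt_mono (a-1) (b-2) hx0 hx1).const_mul (b-1)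
  have h := (h1.sub h2).div_const (Real.Gamma a * Real.Gamma b / Real.Gamma (a+b))
  refine h.congr_deriv ?_
  rw [show (a-2-1:ℝ) = a-3 by ring, show (b-1-1:ℝ) = b-2 by ring,
    show (a-1-1:ℝ) = a-2 by ring, show (b-2-1:ℝ) = b-3 by ring]
  ring

lemma I2_dd (a b : ℝ) {x : ℝ} (hx : x ∈ Set.Ioo (0:ℝ) 1) :
    deriv (deriv (betaDensity a b)) x
      = ((a-1) * ((a-2) * (x^(a-3) * (1-x)^(b-1)) - (b-1) * (x^(a-2) * (1-x)^(b-2)))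
        - (b-1) * ((a-1) * (x^(a-2) * (1-x)^(b-2)) - (b-2) * (x^(a-1) * (1-x)^(b-3)))) /
        (Real.Gamma a * Real.Gamma b / Real.Gamma (a+b)) := by
  have hEq : Set.EqOn (deriv (betaDensity a b))
      (fun y : ℝ => ((a-1) * (y^(a-2) * (1-y)^(b-1)) - (b-1) * (y^(a-1) * (1-y)^(b-2))) /
        (Real.Gamma a * Real.Gamma b / Real.Gamma (a+b))) (Set.Ioo 0 1) :=
    fun y hy => (I2_deriv1 a b hy).deriv
  have hev : deriv (betaDensity a b) =ᶠ[nhds x]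
      (fun y : ℝ => ((a-1) * (y^(a-2) * (1-y)^(b-1)) - (b-1) * (y^(a-1) * (1-y)^(b-2))) /
        (Real.Gamma a * Real.Gamma b / Real.Gamma (a+b))) :=
    Filter.eventuallyEq_of_mem (Ioo_mem_nhds hx.1 hx.2) hEq
  rw [hev.deriv_eq, (I2_deriv2 a b hx).deriv]

/-- For `a, b > 3/2`, the roughness functional of the Beta(a,b) density has the closed form
`∫₀¹ (x(1-x) f_{a,b}''(x))² dx
  = (a-1)(b-1)(a(3b-4)-4b+6) Γ(2a-3) Γ(2b-3) Γ(a+b)²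
    / ((2a+2b-5)(2a+2b-3) Γ(a)² Γ(b)² Γ(2a+2b-6))`. -/
theorem beta_ref_I2_closed_form (a b : ℝ) (ha : 3/2 < a) (hb : 3/2 < b) :
    ∫ x in (0:ℝ)..1, (x * (1 - x) * deriv (deriv (betaDensity a b)) x) ^ 2
      = (a - 1) * (b - 1) * (a * (3 * b - 4) - 4 * b + 6) *
          Real.Gamma (2 * a - 3) * Real.Gamma (2 * b - 3) * Real.Gamma (a + b) ^ 2 /
        ((2 * a + 2 * b - 5) * (2 * a + 2 * b - 3) *
          Real.Gamma a ^ 2 * Real.Gamma b ^ 2 * Real.Gamma (2 * a + 2 * b - 6)) := by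
  have key : Set.EqOn
      (fun x : ℝ => (x * (1 - x) * deriv (deriv (betaDensity a b)) x) ^ 2)
      (fun x : ℝ =>
        (((a-1)*(a-2))^2 * (x ^ ((2*a-3) - 1) * (1-x) ^ ((2*b+1) - 1))
          + ((-4)*(a-1)^2*(a-2)*(b-1)) * (x ^ ((2*a-2) - 1) * (1-x) ^ ((2*b) - 1))
          + (4*(a-1)^2*(b-1)^2 + 2*(a-1)*(a-2)*(b-1)*(b-2)) *
              (x ^ ((2*a-1) - 1) * (1-x) ^ ((2*b-1) - 1))
          + ((-4)*(a-1)*(b-1)^2*(b-2)) * (x ^ ((2*a) - 1) * (1-x) ^ ((2*b-2) - 1))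
          + ((b-1)*(b-2))^2 * (x ^ ((2*a+1) - 1) * (1-x) ^ ((2*b-3) - 1)))
          / (Real.Gamma a * Real.Gamma b / Real.Gamma (a+b)) ^ 2) (Set.Ioo 0 1) := by
    intro x hx
    simp only
    rw [I2_dd a b hx]
    have hx0 : (0:ℝ) < x := hx.1
    have hx1 : (0:ℝ) < 1 - x := by linarith [hx.2]
    rw [show ((2*a-3) - 1 : ℝ) = (a-3)+(a-3)+1+1 by ring,
      show ((2*a-2) - 1 : ℝ) = (a-3)+(a-3)+1+1+1 by ring,
      show ((2*a-1) - 1 : ℝ) = (a-3)+(a-3)+1+1+1+1 by ring,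
      show ((2*a+1) - 1 : ℝ) = (a-3)+(a-3)+1+1+1+1+1+1 by ring,
      show ((2*a) - 1 : ℝ) = (a-3)+(a-3)+1+1+1+1+1 by ring,
      show ((2*b-3) - 1 : ℝ) = (b-3)+(b-3)+1+1 by ring,
      show ((2*b-2) - 1 : ℝ) = (b-3)+(b-3)+1+1+1 by ring,
      show ((2*b-1) - 1 : ℝ) = (b-3)+(b-3)+1+1+1+1 by ring,
      show ((2*b+1) - 1 : ℝ) = (b-3)+(b-3)+1+1+1+1+1+1 by ring,
      show ((2*b) - 1 : ℝ) = (b-3)+(b-3)+1+1+1+1+1 by ring,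
      show (a-1:ℝ) = (a-3)+1+1 by ring,
      show (b-1:ℝ) = (b-3)+1+1 by ring,
      show (a-2:ℝ) = (a-3)+1 by ring,
      show (b-2:ℝ) = (b-3)+1 by ring]
    simp only [Real.rpow_add hx0, Real.rpow_add hx1, Real.rpow_one]
    ring
  have p0u : (0:ℝ) < 2*a-3 := by linarith
  have p0v : (0:ℝ) < 2*b+1 := by linarith
  have p1u : (0:ℝ) < 2*a-2 := by linarith
  have p1v : (0:ℝ) < 2*b := by linarith
  have p2u : (0:ℝ) < 2*a-1 := by linarith
  have p2v : (0:ℝ) < 2*b-1 := by linarith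
  have p3u : (0:ℝ) < 2*a := by linarith
  have p3v : (0:ℝ) < 2*b-2 := by linarith
  have p4u : (0:ℝ) < 2*a+1 := by linarith
  have p4v : (0:ℝ) < 2*b-3 := by linarith
  have H0 := (I2_rbeta_integrable p0u p0v).const_mul (((a-1)*(a-2))^2)
  have H1 := (I2_rbeta_integrable p1u p1v).const_mul ((-4)*(a-1)^2*(a-2)*(b-1))
  have H2 := (I2_rbeta_integrable p2u p2v).const_mul
    (4*(a-1)^2*(b-1)^2 + 2*(a-1)*(a-2)*(b-1)*(b-2))
  have H3 := (I2_rbeta_integrable p3u p3v).const_mul ((-4)*(a-1)*(b-1)^2*(b-2))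
  have H4 := (I2_rbeta_integrable p4u p4v).const_mul (((b-1)*(b-2))^2)
  rw [intervalIntegral.integral_of_le zero_le_one, MeasureTheory.integral_Ioc_eq_integral_Ioo,
    MeasureTheory.setIntegral_congr_fun measurableSet_Ioo key,
    ← MeasureTheory.integral_Ioc_eq_integral_Ioo, ← intervalIntegral.integral_of_le zero_le_one,
    intervalIntegral.integral_div,
    intervalIntegral.integral_add (((H0.add H1).add H2).add H3) H4,
    intervalIntegral.integral_add ((H0.add H1).add H2) H3,
    intervalIntegral.integral_add (H0.add H1) H2,
    intervalIntegral.integral_add H0 H1,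
    intervalIntegral.integral_const_mul, intervalIntegral.integral_const_mul,
    intervalIntegral.integral_const_mul, intervalIntegral.integral_const_mul,
    intervalIntegral.integral_const_mul,
    I2_rbeta_value p0u p0v, I2_rbeta_value p1u p1v, I2_rbeta_value p2u p2v,
    I2_rbeta_value p3u p3v, I2_rbeta_value p4u p4v,
    show (2*a-3)+(2*b+1) = 2*a+2*b-2 by ring,
    show (2*a-2)+(2*b) = 2*a+2*b-2 by ring,
    show (2*a-1)+(2*b-1) = 2*a+2*b-2 by ring,
    show (2*a)+(2*b-2) = 2*a+2*b-2 by ring,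
    show (2*a+1)+(2*b-3) = 2*a+2*b-2 by ring]
  have gam : ∀ s : ℝ, 0 < s → Real.Gamma (s+1) = s * Real.Gamma s :=
    fun s hs => Real.Gamma_add_one hs.ne'
  have ea1 : Real.Gamma (2*a-2) = (2*a-3) * Real.Gamma (2*a-3) := by
    have h := gam (2*a-3) (by linarith); rw [show (2*a-3)+1 = 2*a-2 by ring] at h; exact h
  have ea2 : Real.Gamma (2*a-1) = (2*a-2) * Real.Gamma (2*a-2) := by
    have h := gam (2*a-2) (by linarith); rw [show (2*a-2)+1 = 2*a-1 by ring] at h; exact h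
  have ea3 : Real.Gamma (2*a) = (2*a-1) * Real.Gamma (2*a-1) := by
    have h := gam (2*a-1) (by linarith); rw [show (2*a-1)+1 = 2*a by ring] at h; exact h
  have ea4 : Real.Gamma (2*a+1) = (2*a) * Real.Gamma (2*a) := gam (2*a) (by linarith)
  have eb1 : Real.Gamma (2*b-2) = (2*b-3) * Real.Gamma (2*b-3) := by
    have h := gam (2*b-3) (by linarith); rw [show (2*b-3)+1 = 2*b-2 by ring] at h; exact h
  have eb2 : Real.Gamma (2*b-1) = (2*b-2) * Real.Gamma (2*b-2) := by
    have h := gam (2*b-2) (by linarith); rw [show (2*b-2)+1 = 2*b-1 by ring] at h; exact h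
  have eb3 : Real.Gamma (2*b) = (2*b-1) * Real.Gamma (2*b-1) := by
    have h := gam (2*b-1) (by linarith); rw [show (2*b-1)+1 = 2*b by ring] at h; exact h
  have eb4 : Real.Gamma (2*b+1) = (2*b) * Real.Gamma (2*b) := gam (2*b) (by linarith)
  have es1 : Real.Gamma (2*a+2*b-2) = (2*a+2*b-3) * Real.Gamma (2*a+2*b-3) := by
    have h := gam (2*a+2*b-3) (by linarith); rw [show (2*a+2*b-3)+1 = 2*a+2*b-2 by ring] at h
    exact h
  have es2 : Real.Gamma (2*a+2*b-3) = (2*a+2*b-4) * Real.Gamma (2*a+2*b-4) := by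
    have h := gam (2*a+2*b-4) (by linarith); rw [show (2*a+2*b-4)+1 = 2*a+2*b-3 by ring] at h
    exact h
  have es3 : Real.Gamma (2*a+2*b-4) = (2*a+2*b-5) * Real.Gamma (2*a+2*b-5) := by
    have h := gam (2*a+2*b-5) (by linarith); rw [show (2*a+2*b-5)+1 = 2*a+2*b-4 by ring] at h
    exact h
  have es4 : Real.Gamma (2*a+2*b-5) = (2*a+2*b-6) * Real.Gamma (2*a+2*b-6) := by
    have h := gam (2*a+2*b-6) (by linarith); rw [show (2*a+2*b-6)+1 = 2*a+2*b-5 by ring] at h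
    exact h
  rw [es1, es2, es3, es4, ea4, ea3, ea2, ea1, eb4, eb3, eb2, eb1]
  have hGa : Real.Gamma a ≠ 0 := (Real.Gamma_pos_of_pos (by linarith)).ne'
  have hGb : Real.Gamma b ≠ 0 := (Real.Gamma_pos_of_pos (by linarith)).ne'
  have hGab : Real.Gamma (a+b) ≠ 0 := (Real.Gamma_pos_of_pos (by linarith)).ne'
  have hGs : Real.Gamma (2*a+2*b-6) ≠ 0 := (Real.Gamma_pos_of_pos (by linarith)).ne'
  have n1 : (2*a+2*b-3 : ℝ) ≠ 0 := ne_of_gt (by linarith)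
  have n2 : (2*a+2*b-4 : ℝ) ≠ 0 := ne_of_gt (by linarith)
  have n3 : (2*a+2*b-5 : ℝ) ≠ 0 := ne_of_gt (by linarith)
  have n4 : (2*a+2*b-6 : ℝ) ≠ 0 := ne_of_gt (by linarith)
  field_simp
  rw [show 2*(a+b) = 2*a+2*b by ring]
  rw [div_eq_div_iff (by apply_rules [mul_ne_zero]) (by apply_rules [mul_ne_zero])]
  ring
end

section
/- For real numbers a with 0 < a < 3/2 and a ≠ 1, and b > 3/2, the integral ∫₀¹ ( x(1-x) f_{a,b}''(x) )² dx diverges, i.e., the nonnegative function x ↦ (x(1-x)f_{a,b}''(x))² is not integrable on (0,1), where f_{a,b} is the Beta(a,b) density. -/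
open MeasureTheory

private lemma hasDerivAt_xpq (p q x : ℝ) (hx : 0 < x) (hx1 : x < 1) :
    HasDerivAt (fun y : ℝ => y ^ p * (1 - y) ^ q)
      (p * x ^ (p - 1) * (1 - x) ^ q - q * x ^ p * (1 - x) ^ (q - 1)) x := by
  have h1 : HasDerivAt (fun y : ℝ => y ^ p) (p * x ^ (p - 1)) x :=
    Real.hasDerivAt_rpow_const (Or.inl hx.ne')
  have hsub : HasDerivAt (fun y : ℝ => 1 - y) (-1) x := by
    exact (hasDerivAt_id x).const_sub 1
  have h2 : HasDerivAt (fun y : ℝ => (1 - y) ^ q) (-1 * q * (1 - x) ^ (q - 1)) x :=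
    hsub.rpow_const (Or.inl (by linarith))
  have : HasDerivAt (fun y : ℝ => y ^ p * (1 - y) ^ q) _ x := h1.fun_mul h2
  convert this using 1
  ring

/-- Explicit second derivative of the Beta density on `(0,1)`. -/
private lemma beta_second_deriv (a b : ℝ) {x : ℝ} (hx : x ∈ Set.Ioo (0:ℝ) 1) :
    deriv (deriv (betaDensity a b)) x =
      ((a-1)*(a-2) * (x ^ (a-3) * (1-x) ^ (b-1))
        - 2*(a-1)*(b-1) * (x ^ (a-2) * (1-x) ^ (b-2))
        + (b-1)*(b-2) * (x ^ (a-1) * (1-x) ^ (b-3))) /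
      (Real.Gamma a * Real.Gamma b / Real.Gamma (a + b)) := by
  set B : ℝ := Real.Gamma a * Real.Gamma b / Real.Gamma (a + b) with hB
  set F1 : ℝ → ℝ := fun y =>
    ((a-1) * (y ^ (a-2) * (1-y) ^ (b-1)) - (b-1) * (y ^ (a-1) * (1-y) ^ (b-2))) / B with hF1def
  have hF1 : ∀ y ∈ Set.Ioo (0:ℝ) 1, HasDerivAt (betaDensity a b) (F1 y) y := by
    intro y hy
    have h : HasDerivAt (fun z : ℝ => z ^ (a-1) * (1 - z) ^ (b-1) / B) _ y :=
      (hasDerivAt_xpq (a-1) (b-1) y hy.1 hy.2).div_const B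
    have e1 : a - 1 - 1 = a - 2 := by ring
    have e2 : b - 1 - 1 = b - 2 := by ring
    rw [e1, e2] at h
    convert h using 1
    · rfl
    simp only [hF1def]
    ring
  have hF2 : HasDerivAt F1
      (((a-1)*(a-2) * (x ^ (a-3) * (1-x) ^ (b-1))
        - 2*(a-1)*(b-1) * (x ^ (a-2) * (1-x) ^ (b-2))
        + (b-1)*(b-2) * (x ^ (a-1) * (1-x) ^ (b-3))) / B) x := by
    have h1 := ((hasDerivAt_xpq (a-2) (b-1) x hx.1 hx.2).const_mul (a-1)).fun_sub
      ((hasDerivAt_xpq (a-1) (b-2) x hx.1 hx.2).const_mul (b-1))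
    have h : HasDerivAt (fun z : ℝ => ((a-1) * (z ^ (a-2) * (1-z) ^ (b-1))
        - (b-1) * (z ^ (a-1) * (1-z) ^ (b-2))) / B) _ x := h1.div_const B
    have e1 : a - 2 - 1 = a - 3 := by ring
    have e2 : b - 1 - 1 = b - 2 := by ring
    have e3 : a - 1 - 1 = a - 2 := by ring
    have e4 : b - 2 - 1 = b - 3 := by ring
    rw [e1, e2, e3, e4] at h
    convert h using 1
    ring
  have heq : deriv (betaDensity a b) =ᶠ[nhds x] F1 := by
    filter_upwards [isOpen_Ioo.mem_nhds hx] with y hy using (hF1 y hy).deriv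
  rw [heq.deriv_eq]
  exact hF2.deriv

/-- For `0 < a < 3/2` with `a ≠ 1` and `b > 3/2`, the roughness functional diverges:
the nonnegative function `x ↦ (x(1-x) f_{a,b}''(x))²` is not integrable on `(0,1)`. -/
theorem beta_ref_I2_diverges (a b : ℝ) (ha0 : 0 < a) (ha : a < 3/2) (ha1 : a ≠ 1)
    (hb : 3/2 < b) :
    ¬ IntegrableOn (fun x : ℝ => (x * (1 - x) * deriv (deriv (betaDensity a b)) x) ^ 2)
        (Set.Ioo (0:ℝ) 1) := by
  intro H
  set B : ℝ := Real.Gamma a * Real.Gamma b / Real.Gamma (a + b) with hBdef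
  have hB : 0 < B := by
    apply div_pos
    · exact mul_pos (Real.Gamma_pos_of_pos ha0) (Real.Gamma_pos_of_pos (by linarith))
    · exact Real.Gamma_pos_of_pos (by linarith)
  set P : ℝ → ℝ := fun x =>
    (a-1)*(a-2) * (1-x)^2 - 2*(a-1)*(b-1) * (x*(1-x)) + (b-1)*(b-2) * x^2 with hPdef
  have hP0 : P 0 = (a-1)*(a-2) := by simp [hPdef]
  have hP0ne : P 0 ≠ 0 := by
    rw [hP0]
    have h1 : a - 1 ≠ 0 := sub_ne_zero.mpr ha1
    have h2 : a - 2 ≠ 0 := by intro h; nlinarith [h]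
    exact mul_ne_zero h1 h2
  have hP0pos : 0 < |P 0| := abs_pos.mpr hP0ne
  -- key factorization
  have key : ∀ x ∈ Set.Ioo (0:ℝ) 1,
      x * (1 - x) * deriv (deriv (betaDensity a b)) x
        = x ^ (a-2) * (1-x) ^ (b-2) * P x / B := by
    intro x hx
    rw [beta_second_deriv a b hx]
    have hx0 := hx.1
    have hx1' : (0:ℝ) < 1 - x := by linarith [hx.2]
    have e1 : x ^ (a-2) = x * x ^ (a-3) := by
      have : a - 2 = 1 + (a - 3) := by ring
      rw [this, Real.rpow_add hx0, Real.rpow_one]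
    have e2 : x ^ (a-1) = x * (x * x ^ (a-3)) := by
      have : a - 1 = 1 + (1 + (a - 3)) := by ring
      rw [this, Real.rpow_add hx0, Real.rpow_add hx0, Real.rpow_one]
    have e3 : (1-x) ^ (b-2) = (1-x) * (1-x) ^ (b-3) := by
      have : b - 2 = 1 + (b - 3) := by ring
      rw [this, Real.rpow_add hx1', Real.rpow_one]
    have e4 : (1-x) ^ (b-1) = (1-x) * ((1-x) * (1-x) ^ (b-3)) := by
      have : b - 1 = 1 + (1 + (b - 3)) := by ring
      rw [this, Real.rpow_add hx1', Real.rpow_add hx1', Real.rpow_one]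
    rw [e1, e2, e3, e4]
    simp only [hPdef]
    ring
  -- continuity of P at 0: find ε
  have hPc : ContinuousAt P 0 := by fun_prop
  obtain ⟨δ, hδ, hδP⟩ := Metric.continuousAt_iff.mp hPc (|P 0| / 2) (by positivity)
  set ε : ℝ := min δ (1/2) with hεdef
  have hε : 0 < ε := lt_min hδ (by norm_num)
  have hεhalf : ε ≤ 1/2 := min_le_right _ _
  -- lower bound on |P x| on (0, ε)
  have hPlb : ∀ x ∈ Set.Ioo (0:ℝ) ε, |P 0| / 2 ≤ |P x| := by
    intro x hx
    have hd : dist x 0 < δ := by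
      rw [Real.dist_eq, sub_zero, abs_of_pos hx.1]
      exact hx.2.trans_le (min_le_left _ _)
    have := hδP hd
    rw [Real.dist_eq] at this
    have h1 : |P 0| - |P x| ≤ |P x - P 0| := by
      have := abs_sub_abs_le_abs_sub (P 0) (P x)
      rwa [abs_sub_comm] at this
    linarith
  -- lower bound on (1-x)^(b-2)
  set m : ℝ := (1/2 : ℝ) ^ |b - 2| with hmdef
  have hm : 0 < m := Real.rpow_pos_of_pos (by norm_num) _
  have hmlb : ∀ x ∈ Set.Ioo (0:ℝ) ε, m ≤ (1-x) ^ (b-2) := by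
    intro x hx
    have hx2 : x < 1/2 := hx.2.trans_le hεhalf
    have h12 : (1/2 : ℝ) ≤ 1 - x := by linarith
    have h1 : 1 - x ≤ 1 := by linarith [hx.1]
    rcases le_or_gt 0 (b - 2) with hbc | hbc
    · rw [hmdef, abs_of_nonneg hbc]
      exact Real.rpow_le_rpow (by norm_num) h12 hbc
    · have h2 : (1:ℝ) ≤ (1-x) ^ (b-2) :=
        Real.one_le_rpow_of_pos_of_le_one_of_nonpos (by linarith) h1 hbc.le
      have h3 : m ≤ 1 := Real.rpow_le_one (by norm_num) (by norm_num) (abs_nonneg _)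
      linarith
  set c : ℝ := m * (|P 0| / 2) / B with hcdef
  have hc : 0 < c := by positivity
  -- pointwise lower bound
  have hbound : ∀ x ∈ Set.Ioo (0:ℝ) ε,
      c^2 * x ^ (2*a - 4) ≤ (x * (1 - x) * deriv (deriv (betaDensity a b)) x) ^ 2 := by
    intro x hx
    have hx' : x ∈ Set.Ioo (0:ℝ) 1 := ⟨hx.1, hx.2.trans_le (by linarith)⟩
    have hlb : c * x ^ (a-2) ≤ |x * (1 - x) * deriv (deriv (betaDensity a b)) x| := by
      rw [key x hx']
      have hxp : 0 < x ^ (a-2) := Real.rpow_pos_of_pos hx.1 _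
      have h1x : (0:ℝ) < 1 - x := by linarith [hx'.2]
      rw [abs_div, abs_mul, abs_mul, abs_of_pos hxp,
        abs_of_pos (Real.rpow_pos_of_pos h1x (b-2)), abs_of_pos hB]
      rw [hcdef, div_mul_eq_mul_div, div_le_div_iff_of_pos_right hB]
      calc m * (|P 0| / 2) * x ^ (a-2)
          ≤ ((1-x) ^ (b-2)) * |P x| * x ^ (a-2) := by
            apply mul_le_mul_of_nonneg_right _ hxp.le
            exact mul_le_mul (hmlb x hx) (hPlb x hx) (by positivity)
              (Real.rpow_pos_of_pos h1x _).le
        _ = x ^ (a-2) * (1-x) ^ (b-2) * |P x| := by ring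
    have hnn : 0 ≤ c * x ^ (a-2) := mul_nonneg hc.le (Real.rpow_pos_of_pos hx.1 _).le
    have hsq := mul_self_le_mul_self hnn hlb
    have habs : |x * (1 - x) * deriv (deriv (betaDensity a b)) x| *
        |x * (1 - x) * deriv (deriv (betaDensity a b)) x|
        = (x * (1 - x) * deriv (deriv (betaDensity a b)) x) ^ 2 := by
      rw [← abs_mul, ← sq, abs_sq]
    rw [habs] at hsq
    refine le_trans (le_of_eq ?_) hsq
    have : x ^ (a-2) * x ^ (a-2) = x ^ (2*a - 4) := by
      rw [← Real.rpow_add hx.1]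
      congr 1
      ring
    nlinarith [this]
  -- derive integrability of rpow and contradiction
  have Hε : IntegrableOn (fun x : ℝ => (x * (1 - x) * deriv (deriv (betaDensity a b)) x) ^ 2)
      (Set.Ioo (0:ℝ) ε) := H.mono_set (Set.Ioo_subset_Ioo le_rfl (by linarith))
  have Hr : IntegrableOn (fun x : ℝ => c^2 * x ^ (2*a - 4)) (Set.Ioo (0:ℝ) ε) := by
    apply Integrable.mono' Hε
    · have hcont : ContinuousOn (fun x : ℝ => c^2 * x ^ (2*a - 4)) (Set.Ioo (0:ℝ) ε) :=
        fun x hx => (continuousAt_const.mul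
          (Real.continuousAt_rpow_const x _ (Or.inl hx.1.ne'))).continuousWithinAt
      exact hcont.aestronglyMeasurable measurableSet_Ioo
    · rw [ae_restrict_iff' measurableSet_Ioo]
      filter_upwards with x hx
      rw [Real.norm_eq_abs, abs_of_nonneg
        (mul_nonneg (sq_nonneg c) (Real.rpow_pos_of_pos hx.1 _).le)]
      exact hbound x hx
  have Hr' : IntegrableOn (fun x : ℝ => x ^ (2*a - 4)) (Set.Ioo (0:ℝ) ε) := by
    have h := Hr.const_mul (c^2)⁻¹
    have he : (fun x : ℝ => (c^2)⁻¹ * (c^2 * x ^ (2*a - 4))) = fun x : ℝ => x ^ (2*a - 4) := by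
      funext x
      rw [← mul_assoc, inv_mul_cancel₀ (by positivity : (c:ℝ)^2 ≠ 0), one_mul]
    rwa [he] at h
  rw [intervalIntegral.integrableOn_Ioo_rpow_iff hε] at Hr'
  linarith
end
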